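/- For u, u' distinct elements of V_0 = {0,1}^{n+1} \ {0,(1,…,1)} with supports I, I', the vector p_H(u) − p_H(u') lies in p_H(V_0) if and only if I ⊆ I' or I' ⊆ I; otherwise max_j (u−u')_j − min_i (u−u')_i = 2. -/

import Mathlib

open Set Filter MeasureTheory Pointwise

/-- The hyperplane `H = {x ∈ ℝ^{n+1} : ∑ xᵢ = 0}`. -/
def Hset (n : ℕ) : Set (Fin (n + 1) → ℝ) := {x | ∑ i, x i = 0}

/-- The root lattice `Aₙ = ℤ^{n+1} ∩ H`. -/
def Alat (n : ℕ) : Set (Fin (n + 1) → ℝ) :=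
  {x | (∀ i, ∃ m : ℤ, x i = (m : ℝ)) ∧ ∑ i, x i = 0}

/-- The Voronoï region of `Aₙ` inside `H`. -/
def VorAn (n : ℕ) : Set (Fin (n + 1) → ℝ) :=
  {z | z ∈ Hset n ∧ ∀ x ∈ Alat n, ∑ i, (z i) ^ 2 ≤ ∑ i, (z i - x i) ^ 2}

/-- Orthogonal projection of `ℝ^{n+1}` onto the hyperplane `H`. -/
noncomputable def pH (n : ℕ) (u : Fin (n + 1) → ℝ) : Fin (n + 1) → ℝ :=
  fun i => u i - (∑ j, u j) / (n + 1)

/-- `V₀ = {0,1}^{n+1} \ {0, (1,…,1)}`. -/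
def V0set (n : ℕ) : Set (Fin (n + 1) → ℝ) :=
  {u | (∀ i, u i = 0 ∨ u i = 1) ∧ u ≠ 0 ∧ u ≠ fun _ => 1}

/-- The vertex set of the Voronoï region of `Aₙ`. -/
noncomputable def VPAn (n : ℕ) : Set (Fin (n + 1) → ℝ) := pH n '' V0set n

/-
A difference `x = u - u'` of 0/1 vectors has entries in `{-1, 0, 1}`, and it takes both values `1`
and `-1` exactly when the supports are not nested. Since `p_H` identifies vectors differing by a
constant, `p_H x` is a vertex iff `x + c ∈ V₀` for some constant `c`. This is impossible when `x`
takes the values `1` and `-1`; when the supports are nested, `c = 0` or `c = 1` works, the second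
case following from the first because `w ↦ 1 - w` preserves `V₀` and negates `p_H w`.
-/

def IsBinary {ι : Type*} (u : ι → ℝ) : Prop := ∀ i, u i = 0 ∨ u i = 1

namespace IsBinary

variable {ι : Type*} {u v : ι → ℝ}

lemma nonneg (hu : IsBinary u) (i : ι) : 0 ≤ u i := by
  rcases hu i with h | h <;> simp [h]

lemma le_one (hu : IsBinary u) (i : ι) : u i ≤ 1 := by
  rcases hu i with h | h <;> simp [h]

lemma sub_apply_le_one (hu : IsBinary u) (hv : IsBinary v) (i j : ι) : u i - v j ≤ 1 := by
  linarith [hu.le_one i, hv.nonneg j]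

lemma setOf_eq_one_subset_iff (hu : IsBinary u) (hv : IsBinary v) :
    {i | u i = 1} ⊆ {i | v i = 1} ↔ u ≤ v := by
  refine ⟨fun h i => ?_, fun h i (hi : u i = 1) => ?_⟩
  · rcases hu i with hi | hi
    · exact hi ▸ hv.nonneg i
    · rw [h hi, hi]
  · rcases hv i with h' | h'
    · linarith [h i]
    · exact h'

lemma exists_eq_one_and_eq_zero_of_not_le (hu : IsBinary u) (hv : IsBinary v) (h : ¬ u ≤ v) :
    ∃ i, u i = 1 ∧ v i = 0 := by
  simp only [Pi.le_def, not_forall, not_le] at h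
  obtain ⟨i, hi⟩ := h
  exact ⟨i, (hu i).resolve_left fun h0 => by linarith [hv.nonneg i],
    (hv i).resolve_right fun h1 => by linarith [hu.le_one i]⟩

lemma sub_of_le (hu : IsBinary u) (hv : IsBinary v) (h : v ≤ u) : IsBinary (u - v) := by
  intro i
  rcases hv i with hvi | hvi
  · simpa [hvi] using hu i
  · left
    simp [hvi, le_antisymm (hu.le_one i) (hvi ▸ h i)]

lemma one_sub (hu : IsBinary u) : IsBinary (1 - u) := by
  intro i
  rcases hu i with h | h <;> simp [h]

end IsBinary

lemma pH_sub (n : ℕ) (u v : Fin (n + 1) → ℝ) : pH n (u - v) = pH n u - pH n v := by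
  funext i
  simp only [pH, Pi.sub_apply, Finset.sum_sub_distrib]
  ring

lemma pH_const (n : ℕ) (c : ℝ) : pH n (fun _ => c) = 0 := by
  funext i
  simp only [pH, Finset.sum_const, Finset.card_univ, Fintype.card_fin, nsmul_eq_mul, Nat.cast_add,
    Nat.cast_one, Pi.zero_apply]
  field_simp
  ring

lemma sub_apply_sub_eq_of_pH_eq {n : ℕ} {x y : Fin (n + 1) → ℝ} (h : pH n x = pH n y)
    (i j : Fin (n + 1)) : x i - x j = y i - y j := by
  have hi := congrFun h i
  have hj := congrFun h j
  simp only [pH] at hi hj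
  linarith

lemma one_sub_mem_V0set {n : ℕ} {w : Fin (n + 1) → ℝ} (hw : w ∈ V0set n) : 1 - w ∈ V0set n := by
  obtain ⟨hbin : IsBinary w, hw0, hw1⟩ := hw
  refine ⟨hbin.one_sub, fun h => hw1 ?_, fun h => hw0 ?_⟩
  · funext i
    have hi : 1 - w i = 0 := congrFun h i
    linarith
  · funext i; simpa using congrFun h i

lemma neg_mem_VPAn {n : ℕ} {x : Fin (n + 1) → ℝ} (hx : x ∈ VPAn n) : -x ∈ VPAn n := by
  obtain ⟨w, hw, rfl⟩ := hx
  refine ⟨1 - w, one_sub_mem_V0set hw, ?_⟩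
  rw [pH_sub, show (1 : Fin (n + 1) → ℝ) = fun _ => 1 from rfl, pH_const, zero_sub]

lemma sub_apply_sub_le_one_of_pH_mem_VPAn {n : ℕ} {x : Fin (n + 1) → ℝ} (hx : pH n x ∈ VPAn n)
    (i j : Fin (n + 1)) : x i - x j ≤ 1 := by
  obtain ⟨w, hw, hwx⟩ := hx
  rw [← sub_apply_sub_eq_of_pH_eq hwx]
  exact IsBinary.sub_apply_le_one hw.1 hw.1 i j

lemma pH_sub_mem_VPAn_of_le {n : ℕ} {u v : Fin (n + 1) → ℝ} (hu : u ∈ V0set n)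
    (hv : IsBinary v) (hle : v ≤ u) (hne : u ≠ v) : pH n u - pH n v ∈ VPAn n := by
  obtain ⟨hbin : IsBinary u, -, hu1⟩ := hu
  refine ⟨u - v, ⟨IsBinary.sub_of_le hbin hv hle, sub_ne_zero.mpr hne, fun h => hu1 ?_⟩, pH_sub n u v⟩
  funext i
  have hi : u i - v i = 1 := congrFun h i
  exact le_antisymm (hbin.le_one i) (by linarith [hv.nonneg i])

theorem diff_of_vertices_An_iff_nested_supports (n : ℕ) (u u' : Fin (n + 1) → ℝ)
    (hu : u ∈ V0set n) (hu' : u' ∈ V0set n) (hne : u ≠ u') :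
    (pH n u - pH n u' ∈ VPAn n ↔
      ({i | u i = 1} ⊆ {i | u' i = 1} ∨ {i | u' i = 1} ⊆ {i | u i = 1})) ∧
    (¬ ({i | u i = 1} ⊆ {i | u' i = 1} ∨ {i | u' i = 1} ⊆ {i | u i = 1}) →
      (⨆ i, (u - u') i) - (⨅ i, (u - u') i) = 2) := by
  have hb : IsBinary u := hu.1
  have hb' : IsBinary u' := hu'.1
  rw [hb.setOf_eq_one_subset_iff hb', hb'.setOf_eq_one_subset_iff hb]
  have extremes (h : ¬ (u ≤ u' ∨ u' ≤ u)) : ∃ i j, (u - u') i = 1 ∧ (u - u') j = -1 := by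
    push Not at h
    obtain ⟨i, hi, hi'⟩ := hb.exists_eq_one_and_eq_zero_of_not_le hb' h.1
    obtain ⟨j, hj', hj⟩ := hb'.exists_eq_one_and_eq_zero_of_not_le hb h.2
    exact ⟨i, j, by simp [hi, hi'], by simp [hj, hj']⟩
  refine ⟨⟨fun hmem => ?_, ?_⟩, fun h => ?_⟩
  · by_contra h
    obtain ⟨i, j, hi, hj⟩ := extremes h
    have := sub_apply_sub_le_one_of_pH_mem_VPAn (pH_sub n u u' ▸ hmem) i j
    linarith
  · rintro (hle | hle)
    · simpa using neg_mem_VPAn (pH_sub_mem_VPAn_of_le hu' hb hle hne.symm)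
    · exact pH_sub_mem_VPAn_of_le hu hb' hle hne
  · obtain ⟨i, j, hi, hj⟩ := extremes h
    have hsup : ⨆ k, (u - u') k = 1 :=
      IsGreatest.csSup_eq ⟨⟨i, hi⟩, forall_mem_range.2 fun k => by
        simpa using hb.sub_apply_le_one hb' k k⟩
    have hinf : ⨅ k, (u - u') k = -1 :=
      IsLeast.csInf_eq ⟨⟨j, hj⟩, forall_mem_range.2 fun k => by
        simp only [Pi.sub_apply]; linarith [hb'.sub_apply_le_one hb k k]⟩
    rw [hsup, hinf]
    norm_num
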